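/- Subject expansion for closed redexes: in the deterministic intersection type system, if ⊢ K[L/x] : (g, τ) is derivable (with empty type environment), then ⊢ (λx.K) L : (g, τ) is derivable. -/
import Mathlib


namespace STLC

inductive Ty : Type
  | o : Ty
  | arrow : Ty → Ty → Ty

/-- Intersection types refining sorts, with productivity flags
(`true` = `pr`, `false` = `np`):
`𝒯^o = {r}` and `𝒯^{α→β} = 𝒫({pr,np} × 𝒯^α) × 𝒯^β` (finite subsets). -/
def ITy : Ty → Type
  | .o => PUnit
  | .arrow α β => Finset (Bool × ITy α) × ITy β

noncomputable instance ITy.deq (α : Ty) : DecidableEq (ITy α) := Classical.decEq _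
noncomputable instance (α : Ty) : DecidableEq (Bool × ITy α) := Classical.decEq _

def ITy.base : ITy .o := PUnit.unit

def ITy.arr {α β : Ty} (T : Finset (Bool × ITy α)) (τ : ITy β) : ITy (.arrow α β) :=
  (T, τ)

/-- Intrinsically simply-typed lambda-terms in de Bruijn representation,
over the signature `a : o → o`, `b : o → o → o`, `e : o`. -/
inductive Tm : List Ty → Ty → Type
  | var {Γ} (i : Fin Γ.length) : Tm Γ (Γ.get i)
  | ca {Γ} : Tm Γ (.arrow .o .o)
  | cb {Γ} : Tm Γ (.arrow .o (.arrow .o .o))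
  | ce {Γ} : Tm Γ .o
  | lam {Γ γ δ} (K : Tm (γ :: Γ) δ) : Tm Γ (.arrow γ δ)
  | app {Γ γ δ} (K : Tm Γ (.arrow γ δ)) (L : Tm Γ γ) : Tm Γ δ

/-- Sort-preserving renamings. -/
def Ren (Γ Δ : List Ty) :=
  { f : Fin Γ.length → Fin Δ.length // ∀ i, Δ.get (f i) = Γ.get i }

def Ren.lift {Γ Δ} (r : Ren Γ Δ) (γ : Ty) : Ren (γ :: Γ) (γ :: Δ) :=
  ⟨fun i =>
    match i with
    | ⟨0, _⟩ => ⟨0, Nat.succ_pos _⟩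
    | ⟨j + 1, h⟩ => (r.1 ⟨j, Nat.lt_of_succ_lt_succ h⟩).succ,
   by
    intro i
    match i with
    | ⟨0, _⟩ => rfl
    | ⟨j + 1, h⟩ => exact r.2 ⟨j, Nat.lt_of_succ_lt_succ h⟩⟩

def rename : ∀ {Γ Δ α}, Ren Γ Δ → Tm Γ α → Tm Δ α
  | _, _, _, r, .var i => r.2 i ▸ Tm.var (r.1 i)
  | _, _, _, _, .ca => .ca
  | _, _, _, _, .cb => .cb
  | _, _, _, _, .ce => .ce
  | _, _, _, r, .lam K => .lam (rename (r.lift _) K)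
  | _, _, _, r, .app K L => .app (rename r K) (rename r L)

def Ren.shift {Δ} (γ : Ty) : Ren Δ (γ :: Δ) := ⟨Fin.succ, fun _ => rfl⟩

/-- Sort-preserving substitutions. -/
def Sub (Γ Δ : List Ty) := ∀ i : Fin Γ.length, Tm Δ (Γ.get i)

def Sub.lift {Γ Δ} (s : Sub Γ Δ) (γ : Ty) : Sub (γ :: Γ) (γ :: Δ) :=
  fun i =>
    match i with
    | ⟨0, _⟩ => Tm.var (⟨0, Nat.succ_pos _⟩ : Fin (γ :: Δ).length)
    | ⟨j + 1, h⟩ => rename (Ren.shift γ) (s ⟨j, Nat.lt_of_succ_lt_succ h⟩)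

def substTm : ∀ {Γ Δ α}, Sub Γ Δ → Tm Γ α → Tm Δ α
  | _, _, _, s, .var i => s i
  | _, _, _, _, .ca => .ca
  | _, _, _, _, .cb => .cb
  | _, _, _, _, .ce => .ce
  | _, _, _, s, .lam K => .lam (substTm (s.lift _) K)
  | _, _, _, s, .app K L => .app (substTm s K) (substTm s L)

/-- `subst0 K L = K[L/x]`, substitution of `L` for the variable bound
by the outermost binder. -/
def subst0 {Γ γ δ} (K : Tm (γ :: Γ) δ) (L : Tm Γ γ) : Tm Γ δ :=
  substTm
    (fun i =>
      match i with
      | ⟨0, _⟩ => L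
      | ⟨j + 1, h⟩ => Tm.var ⟨j, Nat.lt_of_succ_lt_succ h⟩)
    K

/-- A type environment: to each variable of the context it assigns a finite set
of (flag, type) pairs (possibly several bindings per variable). -/
def Env (Γ : List Ty) := ∀ i : Fin Γ.length, Finset (Bool × ITy (Γ.get i))

/-- The empty type environment. -/
def Env.empty {Γ : List Ty} : Env Γ := fun _ => ∅

/-- The environment with the single binding `xᵢ : (f, τ)`. -/
noncomputable def Env.single {Γ : List Ty} (i : Fin Γ.length)
    (p : Bool × ITy (Γ.get i)) : Env Γ :=
  fun j => if h : i = j then {h ▸ p} else ∅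

/-- Extending an environment with the set of bindings for a fresh variable. -/
def Env.cons {Γ : List Ty} {γ : Ty} (T : Finset (Bool × ITy γ)) (E : Env Γ) :
    Env (γ :: Γ) := fun j =>
  match j with
  | ⟨0, _⟩ => T
  | ⟨i + 1, h⟩ => E ⟨i, Nat.lt_of_succ_lt_succ h⟩

/-- `|Γ↾pr|`: the number of productive bindings in an environment. -/
noncomputable def Env.prSize {Γ : List Ty} (E : Env Γ) : ℕ :=
  ∑ i : Fin Γ.length, ((E i).filter (fun p => p.1 = true)).card

/-- The union `Γ ∪ ⋃_{i ∈ I} Γᵢ` of the environments of an application node. -/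
noncomputable def Env.appUnion {Γ : List Ty} {ι : Type} [Fintype ι]
    (E₀ : Env Γ) (Es : ι → Env Γ) : Env Γ :=
  fun i => E₀ i ∪ Finset.univ.biUnion (fun p => Es p i)

/-- Derivations in the deterministic intersection type system of Section 3.
`Der E M f τ` derives the judgment `E ⊢ M : (f, τ)`
(`f = true` means the flag `pr`, `f = false` means `np`). -/
inductive Der : ∀ {Γ : List Ty} {α : Ty}, Env Γ → Tm Γ α → Bool → ITy α → Type where
  | ca {Γ : List Ty} (f : Bool) :
      Der (Γ := Γ) Env.empty .ca true (ITy.arr {(f, ITy.base)} ITy.base)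
  | cb {Γ : List Ty} (f₁ f₂ : Bool) :
      Der (Γ := Γ) Env.empty .cb false
        (ITy.arr {(f₁, ITy.base)} (ITy.arr {(f₂, ITy.base)} ITy.base))
  | ce {Γ : List Ty} :
      Der (Γ := Γ) Env.empty .ce false ITy.base
  | var {Γ : List Ty} (i : Fin Γ.length) (f : Bool) (τ : ITy (Γ.get i)) :
      Der (Env.single i (f, τ)) (.var i) false τ
  | lam {Γ : List Ty} {γ δ : Ty} {K : Tm (γ :: Γ) δ} {E : Env Γ}
      {T : Finset (Bool × ITy γ)} {f : Bool} {τ : ITy δ} :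
      Der (Env.cons T E) K f τ →
      Der E (.lam K) f (ITy.arr T τ)
  | app {Γ : List Ty} {γ δ : Ty} {K : Tm Γ (.arrow γ δ)} {L : Tm Γ γ}
      {T : Finset (Bool × ITy γ)} {τ : ITy δ} {f' : Bool} {E₀ : Env Γ}
      (dK : Der E₀ K f' (ITy.arr T τ))
      (fo : {p // p ∈ T} → Bool) (Es : {p // p ∈ T} → Env Γ)
      (dL : ∀ p : {p // p ∈ T}, Der (Es p) L (fo p) p.1.2)
      (hb : ∀ p : {p // p ∈ T}, p.1.1 = (fo p || decide (0 < (Es p).prSize)))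
      (f : Bool)
      (hf : f = true ↔
        (f' = true ∨ (∃ p, fo p = true) ∨
          Env.prSize (Env.appUnion E₀ Es) < E₀.prSize + ∑ p : {p // p ∈ T}, (Es p).prSize)) :
      Der (Env.appUnion E₀ Es) (.app K L) f τ

/-- The value of a derivation: the sum over all nodes of the node values
(`1` at `a`-nodes, the number of duplicated productive bindings at application
nodes, `0` elsewhere). -/
noncomputable def Der.val :
    ∀ {Γ : List Ty} {α : Ty} {E : Env Γ} {M : Tm Γ α} {f : Bool} {τ : ITy α},
      Der E M f τ → ℕ
  | _, _, _, _, _, _, .ca _ => 1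
  | _, _, _, _, _, _, .cb _ _ => 0
  | _, _, _, _, _, _, .ce => 0
  | _, _, _, _, _, _, .var _ _ _ => 0
  | _, _, _, _, _, _, .lam d => d.val
  | _, _, _, _, _, _, .app (E₀ := E₀) dK fo Es dL _ _ _ =>
      (E₀.prSize + (∑ p, (Es p).prSize) - Env.prSize (Env.appUnion E₀ Es))
        + dK.val + ∑ p, (dL p).val


section Infra

/-! ### Cast helpers -/

def castTm {Δ : List Ty} {a b : Ty} (h : a = b) (M : Tm Δ a) : Tm Δ b := h ▸ M

def castI {a b : Ty} (h : a = b) (t : ITy a) : ITy b := h ▸ t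

def castF {a b : Ty} (h : a = b) (S : Finset (Bool × ITy a)) :
    Finset (Bool × ITy b) := h ▸ S

@[simp] lemma castTm_rfl {Δ : List Ty} {a : Ty} (M : Tm Δ a) : castTm rfl M = M := rfl
@[simp] lemma castI_rfl {a : Ty} (t : ITy a) : castI rfl t = t := rfl
@[simp] lemma castF_rfl {a : Ty} (S : Finset (Bool × ITy a)) : castF rfl S = S := rfl

lemma castTm_castTm {Δ : List Ty} {a b c : Ty} (h : a = b) (h' : b = c) (M : Tm Δ a) :
    castTm h' (castTm h M) = castTm (h.trans h') M := by subst h; subst h'; rfl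

@[simp] lemma castF_empty {a b : Ty} (h : a = b) : castF h (∅ : Finset (Bool × ITy a)) = ∅ := by
  subst h; rfl

lemma castF_union {a b : Ty} (h : a = b) (S S' : Finset (Bool × ITy a)) :
    castF h (S ∪ S') = castF h S ∪ castF h S' := by subst h; rfl

lemma castF_biUnion {a b : Ty} (h : a = b) {ι : Type} [Fintype ι]
    (g : ι → Finset (Bool × ITy a)) :
    castF h (Finset.univ.biUnion g) = Finset.univ.biUnion (fun p => castF h (g p)) := by
  subst h; rfl

lemma castF_singleton {a b : Ty} (h : a = b) (g : Bool) (t : ITy a) :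
    castF h ({(g, t)} : Finset (Bool × ITy a)) = {(g, castI h t)} := by subst h; rfl

lemma castF_filter_card {a b : Ty} (h : a = b) (S : Finset (Bool × ITy a)) :
    ((castF h S).filter (fun p => p.1 = true)).card
      = (S.filter (fun p => p.1 = true)).card := by subst h; rfl

lemma mem_castF {a b : Ty} (h : a = b) (S : Finset (Bool × ITy a)) (g : Bool) (t : ITy b) :
    (g, t) ∈ castF h S ↔ (g, castI h.symm t) ∈ S := by subst h; rfl

/-! ### Renaming lemmas -/

lemma rename_var {Γ Δ : List Ty} (r : Ren Γ Δ) (i : Fin Γ.length) :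
    rename r (Tm.var i) = castTm (r.2 i) (Tm.var (r.1 i)) := rfl

lemma rename_ca {Γ Δ : List Ty} (r : Ren Γ Δ) : rename r (.ca : Tm Γ _) = .ca := rfl
lemma rename_cb {Γ Δ : List Ty} (r : Ren Γ Δ) : rename r (.cb : Tm Γ _) = .cb := rfl
lemma rename_ce {Γ Δ : List Ty} (r : Ren Γ Δ) : rename r (.ce : Tm Γ _) = .ce := rfl
lemma rename_lam {Γ Δ : List Ty} {β δ : Ty} (r : Ren Γ Δ) (K : Tm (β :: Γ) δ) :
    rename r (.lam K) = .lam (rename (r.lift β) K) := rfl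
lemma rename_app {Γ Δ : List Ty} {β δ : Ty} (r : Ren Γ Δ) (K : Tm Γ (.arrow β δ))
    (N : Tm Γ β) : rename r (.app K N) = .app (rename r K) (rename r N) := rfl

lemma rename_castTm {Γ Δ : List Ty} {a b : Ty} (r : Ren Γ Δ) (h : a = b) (M : Tm Γ a) :
    rename r (castTm h M) = castTm h (rename r M) := by subst h; rfl

def Ren.comp {Γ Δ Θ : List Ty} (r' : Ren Δ Θ) (r : Ren Γ Δ) : Ren Γ Θ :=
  ⟨fun i => r'.1 (r.1 i), fun i => (r'.2 (r.1 i)).trans (r.2 i)⟩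

lemma Ren.lift_comp {Γ Δ Θ : List Ty} (r' : Ren Δ Θ) (r : Ren Γ Δ) (β : Ty) :
    (r'.comp r).lift β = (r'.lift β).comp (r.lift β) := by
  apply Subtype.ext
  funext i
  match i with
  | ⟨0, _⟩ => rfl
  | ⟨j + 1, h⟩ => rfl

lemma rename_comp {Γ Δ Θ : List Ty} {α : Ty} (r' : Ren Δ Θ) (r : Ren Γ Δ) (M : Tm Γ α) :
    rename r' (rename r M) = rename (r'.comp r) M := by
  induction M generalizing Δ Θ with
  | var i =>
      rw [rename_var, rename_castTm, rename_var, castTm_castTm, rename_var]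
      rfl
  | ca => rfl
  | cb => rfl
  | ce => rfl
  | lam K ih =>
      show Tm.lam _ = Tm.lam _
      rw [ih, Ren.lift_comp]
  | app K L ihK ihL =>
      show Tm.app _ _ = Tm.app _ _
      rw [ihK, ihL]

def Ren.idR (Γ : List Ty) : Ren Γ Γ := ⟨fun i => i, fun _ => rfl⟩

lemma Ren.lift_idR (Γ : List Ty) (β : Ty) : (Ren.idR Γ).lift β = Ren.idR (β :: Γ) := by
  apply Subtype.ext
  funext i
  match i with
  | ⟨0, _⟩ => rfl
  | ⟨j + 1, h⟩ => rfl

lemma rename_idR {Γ : List Ty} {α : Ty} (M : Tm Γ α) : rename (Ren.idR Γ) M = M := by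
  induction M with
  | var i => rfl
  | ca => rfl
  | cb => rfl
  | ce => rfl
  | lam K ih => show Tm.lam _ = Tm.lam _; rw [Ren.lift_idR, ih]
  | app K L ihK ihL => show Tm.app _ _ = Tm.app _ _; rw [ihK, ihL]

lemma ren_nil_eq {Δ : List Ty} (r r' : Ren [] Δ) : r = r' :=
  Subtype.ext (funext fun i => Fin.elim0 i)

def Ren.emptyR (Δ : List Ty) : Ren [] Δ := ⟨fun i => Fin.elim0 i, fun i => Fin.elim0 i⟩

def wk {γ : Ty} (L : Tm [] γ) (Δ : List Ty) : Tm Δ γ := rename (Ren.emptyR Δ) L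

lemma rename_wk {γ : Ty} (L : Tm [] γ) {Δ Θ : List Ty} (r : Ren Δ Θ) :
    rename r (wk L Δ) = wk L Θ := by
  unfold wk
  rw [rename_comp, ren_nil_eq (r.comp (Ren.emptyR Δ)) (Ren.emptyR Θ)]

lemma wk_nil {γ : Ty} (L : Tm [] γ) : wk L [] = L := by
  unfold wk
  rw [ren_nil_eq (Ren.emptyR []) (Ren.idR []), rename_idR]

end Infra
section Infra2

/-! ### Environment lemmas -/

lemma env_nil_eq (E : Env []) : E = Env.empty := funext fun i => Fin.elim0 i

lemma prSize_nil (E : Env []) : E.prSize = 0 := by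
  unfold Env.prSize
  simp

@[simp] lemma single_self {Γ : List Ty} (i : Fin Γ.length) (p : Bool × ITy (Γ.get i)) :
    Env.single i p i = {p} := by
  simp [Env.single]

lemma single_ne {Γ : List Ty} (i j : Fin Γ.length) (p : Bool × ITy (Γ.get i))
    (h : i ≠ j) : Env.single i p j = ∅ := by
  simp [Env.single, h]

lemma der_cast_inv {Δ : List Ty} {a b : Ty} (h : a = b) (M : Tm Δ a) {E : Env Δ}
    {f : Bool} {τ : ITy b} (d : Der E (castTm h M) f τ) :
    ∃ τ₀ : ITy a, τ = castI h τ₀ ∧ Nonempty (Der E M f τ₀) := by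
  subst h; exact ⟨τ, rfl, ⟨d⟩⟩

/-- prSize of a pulled-back environment along an injective index map. -/
lemma prSize_pullback {Γ Δ : List Ty} (r : Fin Γ.length → Fin Δ.length)
    (hinj : Function.Injective r)
    (hty : ∀ i, Δ.get (r i) = Γ.get i)
    (E' : Env Γ) (E : Env Δ)
    (h1 : ∀ i, E' i = castF (hty i) (E (r i)))
    (h2 : ∀ j, (∀ i, r i ≠ j) → E j = ∅) :
    E'.prSize = E.prSize := by
  unfold Env.prSize
  rw [show (∑ j : Fin Δ.length, ((E j).filter (fun p => p.1 = true)).card)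
      = ∑ j ∈ Finset.univ.image r, ((E j).filter (fun p => p.1 = true)).card from ?_]
  · rw [Finset.sum_image (fun a _ b _ h => hinj h)]
    apply Finset.sum_congr rfl
    intro i _
    rw [h1 i, castF_filter_card]
  · symm
    apply Finset.sum_subset (Finset.subset_univ _)
    intro j _ hj
    simp only [Finset.mem_image, Finset.mem_univ, true_and] at hj
    rw [h2 j (fun i hi => hj ⟨i, hi⟩)]
    simp

/-- prSize of an extension environment. -/
lemma prSize_ext {γ : Ty} {Γ Δ : List Ty} (i0 : Fin Γ.length)
    (cinv : Fin Δ.length → Fin Γ.length)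
    (hne : ∀ j, cinv j ≠ i0) (hinj : Function.Injective cinv)
    (hcover : ∀ i, i = i0 ∨ ∃ j, cinv j = i)
    (hty : ∀ j, Δ.get j = Γ.get (cinv j)) (h0 : Γ.get i0 = γ)
    (E' : Env Γ) (E : Env Δ) (T : Finset (Bool × ITy γ))
    (hrel : ∀ j, E' (cinv j) = castF (hty j) (E j))
    (hrelT : E' i0 = castF h0.symm T) :
    E'.prSize = E.prSize + (T.filter (fun p => p.1 = true)).card := by
  unfold Env.prSize
  have huniv : (Finset.univ : Finset (Fin Γ.length))
      = insert i0 (Finset.univ.image cinv) := by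
    ext i
    simp only [Finset.mem_univ, Finset.mem_insert, Finset.mem_image, true_and, true_iff]
    rcases hcover i with h | ⟨j, hj⟩
    · exact Or.inl h
    · exact Or.inr ⟨j, hj⟩
  rw [huniv, Finset.sum_insert (by
    simp only [Finset.mem_image, Finset.mem_univ, true_and]
    rintro ⟨j, hj⟩
    exact hne j hj)]
  rw [Finset.sum_image (fun a _ b _ h => hinj h)]
  rw [hrelT, castF_filter_card]
  rw [Finset.sum_congr rfl (fun j _ => by rw [hrel j, castF_filter_card])]
  omega

lemma prSize_appUnion_le {Γ : List Ty} {ι : Type} [Fintype ι]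
    (E₀ : Env Γ) (Es : ι → Env Γ) :
    (Env.appUnion E₀ Es).prSize ≤ E₀.prSize + ∑ p, (Es p).prSize := by
  unfold Env.prSize Env.appUnion
  have step : ∀ i : Fin Γ.length,
      (Finset.filter (fun p => p.1 = true) (E₀ i ∪ Finset.univ.biUnion fun p => Es p i)).card
        ≤ (Finset.filter (fun p => p.1 = true) (E₀ i)).card
          + ∑ p : ι, (Finset.filter (fun p => p.1 = true) (Es p i)).card := by
    intro i
    have h1 : (Finset.filter (fun p => p.1 = true) (E₀ i ∪ Finset.univ.biUnion fun p => Es p i)).card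
        ≤ (Finset.filter (fun p => p.1 = true) (E₀ i)).card
          + (Finset.filter (fun p => p.1 = true) (Finset.univ.biUnion fun p => Es p i)).card := by
      rw [Finset.filter_union]
      exact Finset.card_union_le _ _
    have h2 : (Finset.filter (fun p => p.1 = true) (Finset.univ.biUnion fun p => Es p i)).card
        ≤ ∑ p : ι, (Finset.filter (fun p => p.1 = true) (Es p i)).card := by
      rw [Finset.filter_biUnion]
      exact Finset.card_biUnion_le
    omega
  have h3 := Finset.sum_le_sum (fun i (_ : i ∈ Finset.univ) => step i)
  rw [Finset.sum_add_distrib, Finset.sum_comm] at h3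
  exact h3

end Infra2
section Inversion

def tmTag {Δ : List Ty} {a : Ty} : Tm Δ a → ℕ
  | .var _ => 0
  | .ca => 1
  | .cb => 2
  | .ce => 3
  | .lam _ => 4
  | .app _ _ => 5

def tmIdx {Δ : List Ty} {a : Ty} : Tm Δ a → Option (Fin Δ.length)
  | .var j => some j
  | _ => none

/-- Packed inversion for derivations. -/
lemma der_inv {Δ : List Ty} {a : Ty} {E : Env Δ} {M : Tm Δ a} {f : Bool} {τ : ITy a}
    (d : Der E M f τ) :
    (∃ (j : Fin Δ.length) (g : Bool) (τ' : ITy (Δ.get j)),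
        (⟨a, M, τ⟩ : Σ t, Tm Δ t × ITy t) = ⟨Δ.get j, .var j, τ'⟩
        ∧ E = Env.single j (g, τ') ∧ f = false)
  ∨ (∃ (g : Bool), (⟨a, M, τ⟩ : Σ t, Tm Δ t × ITy t) = ⟨_, .ca, ITy.arr {(g, ITy.base)} ITy.base⟩
        ∧ E = Env.empty ∧ f = true)
  ∨ (∃ (g₁ : Bool) (g₂ : Bool), (⟨a, M, τ⟩ : Σ t, Tm Δ t × ITy t)
        = ⟨_, .cb, ITy.arr {(g₁, ITy.base)} (ITy.arr {(g₂, ITy.base)} ITy.base)⟩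
        ∧ E = Env.empty ∧ f = false)
  ∨ ((⟨a, M, τ⟩ : Σ t, Tm Δ t × ITy t) = ⟨.o, .ce, ITy.base⟩ ∧ E = Env.empty ∧ f = false)
  ∨ (∃ (β : Ty) (δ : Ty) (K : Tm (β :: Δ) δ) (T : Finset (Bool × ITy β)) (τ₁ : ITy δ),
        (⟨a, M, τ⟩ : Σ t, Tm Δ t × ITy t) = ⟨.arrow β δ, .lam K, ITy.arr T τ₁⟩
        ∧ Nonempty (Der (Env.cons T E) K f τ₁))
  ∨ (∃ (β : Ty) (K : Tm Δ (.arrow β a)) (N : Tm Δ β) (T : Finset (Bool × ITy β)) (f' : Bool)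
        (E₀ : Env Δ) (fo : {p // p ∈ T} → Bool) (Es : {p // p ∈ T} → Env Δ),
        M = .app K N
        ∧ E = Env.appUnion E₀ Es
        ∧ Nonempty (Der E₀ K f' (ITy.arr T τ))
        ∧ (∀ p, Nonempty (Der (Es p) N (fo p) p.1.2))
        ∧ (∀ p, p.1.1 = (fo p || decide (0 < (Es p).prSize)))
        ∧ (f = true ↔ (f' = true ∨ (∃ p, fo p = true) ∨
            Env.prSize (Env.appUnion E₀ Es) < E₀.prSize
              + ∑ p : {p // p ∈ T}, (Es p).prSize))) := by
  cases d with
  | ca g => exact Or.inr (Or.inl ⟨g, rfl, rfl, rfl⟩)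
  | cb g₁ g₂ => exact Or.inr (Or.inr (Or.inl ⟨g₁, g₂, rfl, rfl, rfl⟩))
  | ce => exact Or.inr (Or.inr (Or.inr (Or.inl ⟨rfl, rfl, rfl⟩)))
  | var j g τ' => exact Or.inl ⟨j, g, τ', rfl, rfl, rfl⟩
  | lam d₁ => exact Or.inr (Or.inr (Or.inr (Or.inr (Or.inl ⟨_, _, _, _, _, rfl, ⟨d₁⟩⟩))))
  | app dK fo Es dL hb f hf =>
      exact Or.inr (Or.inr (Or.inr (Or.inr (Or.inr
        ⟨_, _, _, _, _, _, fo, Es, rfl, rfl, ⟨dK⟩, fun p => ⟨dL p⟩, hb, hf⟩))))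

lemma der_var_inv {Δ : List Ty} {j : Fin Δ.length} {E : Env Δ} {f : Bool}
    {τ : ITy (Δ.get j)} (d : Der E (.var j) f τ) :
    ∃ g, E = Env.single j (g, τ) ∧ f = false := by
  rcases der_inv d with ⟨j', g, τ', h, hE, hf⟩ | ⟨g, h, _, _⟩ | ⟨g₁, g₂, h, _, _⟩
    | ⟨h, _, _⟩ | ⟨β, δ, K, T, τ₁, h, _⟩ | ⟨β, K, N, T, f', E₀, fo, Es, h, _⟩
  · have hj : j = j' := by
      have := congrArg (fun p => tmIdx p.2.1) h
      simpa [tmIdx] using this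
    subst hj
    injection h with h1 h2
    have h3 := h2
    injection h3 with hM h4
    subst h4
    exact ⟨g, hE, hf⟩
  all_goals first
    | (exact absurd (congrArg (fun p => tmTag p.2.1) h) (by simp [tmTag]))
    | (exact absurd (congrArg tmTag h) (by simp [tmTag]))

lemma der_ca_inv {Δ : List Ty} {E : Env Δ} {f : Bool} {τ : ITy (.arrow .o .o)}
    (d : Der E (.ca : Tm Δ _) f τ) :
    ∃ g, τ = ITy.arr {(g, ITy.base)} ITy.base ∧ E = Env.empty ∧ f = true := by
  rcases der_inv d with ⟨j', g, τ', h, hE, hf⟩ | ⟨g, h, hE, hf⟩ | ⟨g₁, g₂, h, _, _⟩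
    | ⟨h, _, _⟩ | ⟨β, δ, K, T, τ₁, h, _⟩ | ⟨β, K, N, T, f', E₀, fo, Es, h, _⟩
  case inr.inl =>
    injection h with h1 h2
    have h3 := h2
    injection h3 with hM h4
    exact ⟨g, h4, hE, hf⟩
  all_goals first
    | (exact absurd (congrArg (fun p => tmTag p.2.1) h) (by simp [tmTag]))
    | (exact absurd (congrArg tmTag h) (by simp [tmTag]))

lemma der_cb_inv {Δ : List Ty} {E : Env Δ} {f : Bool} {τ : ITy (.arrow .o (.arrow .o .o))}
    (d : Der E (.cb : Tm Δ _) f τ) :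
    ∃ g₁ g₂, τ = ITy.arr {(g₁, ITy.base)} (ITy.arr {(g₂, ITy.base)} ITy.base)
      ∧ E = Env.empty ∧ f = false := by
  rcases der_inv d with ⟨j', g, τ', h, hE, hf⟩ | ⟨g, h, hE, hf⟩ | ⟨g₁, g₂, h, hE, hf⟩
    | ⟨h, _, _⟩ | ⟨β, δ, K, T, τ₁, h, _⟩ | ⟨β, K, N, T, f', E₀, fo, Es, h, _⟩
  case inr.inr.inl =>
    injection h with h1 h2
    have h3 := h2
    injection h3 with hM h4
    exact ⟨g₁, g₂, h4, hE, hf⟩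
  all_goals first
    | (exact absurd (congrArg (fun p => tmTag p.2.1) h) (by simp [tmTag]))
    | (exact absurd (congrArg tmTag h) (by simp [tmTag]))

lemma der_ce_inv {Δ : List Ty} {E : Env Δ} {f : Bool} {τ : ITy .o}
    (d : Der E (.ce : Tm Δ _) f τ) : E = Env.empty ∧ f = false := by
  rcases der_inv d with ⟨j', g, τ', h, hE, hf⟩ | ⟨g, h, hE, hf⟩ | ⟨g₁, g₂, h, hE, hf⟩
    | ⟨h, hE, hf⟩ | ⟨β, δ, K, T, τ₁, h, _⟩ | ⟨β, K, N, T, f', E₀, fo, Es, h, _⟩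
  case inr.inr.inr.inl => exact ⟨hE, hf⟩
  all_goals first
    | (exact absurd (congrArg (fun p => tmTag p.2.1) h) (by simp [tmTag]))
    | (exact absurd (congrArg tmTag h) (by simp [tmTag]))

lemma der_lam_inv {Δ : List Ty} {β δ : Ty} {K : Tm (β :: Δ) δ} {E : Env Δ} {f : Bool}
    {τ : ITy (.arrow β δ)} (d : Der E (.lam K) f τ) :
    ∃ (T : Finset (Bool × ITy β)) (τ₁ : ITy δ),
      τ = ITy.arr T τ₁ ∧ Nonempty (Der (Env.cons T E) K f τ₁) := by
  rcases der_inv d with ⟨j', g, τ', h, hE, hf⟩ | ⟨g, h, hE, hf⟩ | ⟨g₁, g₂, h, hE, hf⟩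
    | ⟨h, hE, hf⟩ | ⟨β', δ', K', T, τ₁, h, hd⟩ | ⟨β', K', N, T, f', E₀, fo, Es, h, _⟩
  case inr.inr.inr.inr.inl =>
    have hty : Ty.arrow β δ = Ty.arrow β' δ' := congrArg Sigma.fst h
    injection hty with hβ hδ
    subst hβ; subst hδ
    injection h with h1 h2
    have h3 := h2
    injection h3 with hK hτ
    injection hK with _ _ _ hK'
    subst hK'
    exact ⟨T, τ₁, hτ, hd⟩
  all_goals first
    | (exact absurd (congrArg (fun p => tmTag p.2.1) h) (by simp [tmTag]))
    | (exact absurd (congrArg tmTag h) (by simp [tmTag]))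

lemma der_app_inv {Δ : List Ty} {β δ : Ty} {K : Tm Δ (.arrow β δ)} {N : Tm Δ β}
    {E : Env Δ} {f : Bool} {τ : ITy δ} (d : Der E (.app K N) f τ) :
    ∃ (T : Finset (Bool × ITy β)) (f' : Bool) (E₀ : Env Δ) (fo : {p // p ∈ T} → Bool)
      (Es : {p // p ∈ T} → Env Δ),
      E = Env.appUnion E₀ Es
      ∧ Nonempty (Der E₀ K f' (ITy.arr T τ))
      ∧ (∀ p, Nonempty (Der (Es p) N (fo p) p.1.2))
      ∧ (∀ p, p.1.1 = (fo p || decide (0 < (Es p).prSize)))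
      ∧ (f = true ↔ (f' = true ∨ (∃ p, fo p = true) ∨
          Env.prSize (Env.appUnion E₀ Es) < E₀.prSize
            + ∑ p : {p // p ∈ T}, (Es p).prSize)) := by
  rcases der_inv d with ⟨j', g, τ', h, hE, hf⟩ | ⟨g, h, hE, hf⟩ | ⟨g₁, g₂, h, hE, hf⟩
    | ⟨h, hE, hf⟩ | ⟨β', δ', K', T, τ₁, h, hd⟩ | ⟨β', K', N', T, f', E₀, fo, Es, h, hE, hdK, hdL, hb, hf⟩
  case inr.inr.inr.inr.inr =>
    injection h with h1 h2 h3 h4 h5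
    subst h2
    have hK := eq_of_heq h4
    have hN := eq_of_heq h5
    subst hK
    subst hN
    exact ⟨T, f', E₀, fo, Es, hE, hdK, hdL, hb, hf⟩
  all_goals first
    | (exact absurd (congrArg (fun p => tmTag p.2.1) h) (by simp [tmTag]))
    | (exact absurd (congrArg tmTag h) (by simp [tmTag]))

end Inversion
section RenInv

lemma Ren.lift_inj {Γ Δ : List Ty} (r : Ren Γ Δ) (hr : Function.Injective r.1) (β : Ty) :
    Function.Injective ((r.lift β).1) := by
  intro i i' he
  match i, i' with
  | ⟨0, h1⟩, ⟨0, h2⟩ => rfl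
  | ⟨0, h1⟩, ⟨j+1, h2⟩ =>
      have hv : (0 : ℕ) = (r.1 ⟨j, Nat.lt_of_succ_lt_succ h2⟩).val + 1 := congrArg Fin.val he
      exact absurd hv (by omega)
  | ⟨j+1, h1⟩, ⟨0, h2⟩ =>
      have hv : (r.1 ⟨j, Nat.lt_of_succ_lt_succ h1⟩).val + 1 = (0 : ℕ) := congrArg Fin.val he
      exact absurd hv (by omega)
  | ⟨j+1, h1⟩, ⟨k+1, h2⟩ =>
      have hv : (r.1 ⟨j, Nat.lt_of_succ_lt_succ h1⟩).val + 1
          = (r.1 ⟨k, Nat.lt_of_succ_lt_succ h2⟩).val + 1 := congrArg Fin.val he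
      have h3 : r.1 ⟨j, Nat.lt_of_succ_lt_succ h1⟩ = r.1 ⟨k, Nat.lt_of_succ_lt_succ h2⟩ :=
        Fin.ext (by omega)
      have h4 := congrArg Fin.val (hr h3)
      simp only at h4
      exact Fin.ext (by simp; omega)

/-- Inversion of derivations along an injective renaming. -/
lemma ren_inv : ∀ {Γ Δ : List Ty} {α : Ty} (M : Tm Γ α) (r : Ren Γ Δ),
    Function.Injective r.1 → ∀ {E : Env Δ} {f : Bool} {τ : ITy α},
    Der E (rename r M) f τ →
    ∃ E' : Env Γ, Nonempty (Der E' M f τ) ∧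
      (∀ i, E' i = castF (r.2 i) (E (r.1 i))) ∧
      (∀ j, (∀ i, r.1 i ≠ j) → E j = ∅) := by
  intro Γ Δ α M
  induction M generalizing Δ with
  | var i =>
      intro r hr E f τ d
      rw [rename_var] at d
      obtain ⟨τ₀, hτ, ⟨d'⟩⟩ := der_cast_inv _ _ d
      obtain ⟨g, hE, hf⟩ := der_var_inv d'
      subst hτ; subst hE; subst hf
      refine ⟨Env.single i (g, castI (r.2 i) τ₀), ⟨Der.var i g _⟩, ?_, ?_⟩
      · intro i'
        by_cases hii : i = i'
        · subst hii
          rw [single_self, single_self, castF_singleton]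
        · rw [single_ne _ _ _ hii, single_ne _ _ _ (fun he => hii (hr he)), castF_empty]
      · intro j hj
        exact single_ne _ _ _ (hj i)
  | ca =>
      intro r hr E f τ d
      rw [rename_ca] at d
      obtain ⟨g, hτ, hE, hf⟩ := der_ca_inv d
      subst hτ; subst hE; subst hf
      refine ⟨Env.empty, ⟨Der.ca g⟩, fun i => ?_, fun j _ => rfl⟩
      show (∅ : Finset _) = castF _ (∅ : Finset _)
      rw [castF_empty]
  | cb =>
      intro r hr E f τ d
      rw [rename_cb] at d
      obtain ⟨g₁, g₂, hτ, hE, hf⟩ := der_cb_inv d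
      subst hτ; subst hE; subst hf
      refine ⟨Env.empty, ⟨Der.cb g₁ g₂⟩, fun i => ?_, fun j _ => rfl⟩
      show (∅ : Finset _) = castF _ (∅ : Finset _)
      rw [castF_empty]
  | ce =>
      intro r hr E f τ d
      rw [rename_ce] at d
      obtain ⟨hE, hf⟩ := der_ce_inv d
      subst hE; subst hf
      have hτ : τ = ITy.base := rfl
      refine ⟨Env.empty, ⟨hτ ▸ Der.ce⟩, fun i => ?_, fun j _ => rfl⟩
      show (∅ : Finset _) = castF _ (∅ : Finset _)
      rw [castF_empty]
  | lam K ih =>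
      intro r hr E f τ d
      rw [rename_lam] at d
      obtain ⟨T, τ₁, hτ, ⟨d₁⟩⟩ := der_lam_inv d
      subst hτ
      obtain ⟨E'', ⟨d₂⟩, hc1, hc2⟩ := ih (r.lift _) (Ren.lift_inj r hr _) d₁
      have hE0 : E'' ⟨0, Nat.succ_pos _⟩ = T := hc1 ⟨0, Nat.succ_pos _⟩
      have hEE : Env.cons T (fun i => E'' i.succ) = E'' := by
        funext i
        match i with
        | ⟨0, h⟩ => exact hE0.symm
        | ⟨k+1, h⟩ => rfl
      rw [← hEE] at d₂
      refine ⟨fun i => E'' i.succ, ⟨Der.lam d₂⟩, ?_, ?_⟩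
      · intro i
        exact hc1 i.succ
      · intro j hj
        refine hc2 j.succ ?_
        intro i'
        match i' with
        | ⟨0, h⟩ =>
            intro he
            have hv : (0 : ℕ) = (j.val + 1 : ℕ) := congrArg Fin.val he
            exact absurd hv (by omega)
        | ⟨k+1, h⟩ =>
            intro he
            exact hj ⟨k, Nat.lt_of_succ_lt_succ h⟩ (Fin.succ_injective _ (by exact he))
  | app K₁ K₂ ih₁ ih₂ =>
      intro r hr E f τ d
      rw [rename_app] at d
      obtain ⟨T, fK, E₀, fo, Es, hE, ⟨dK⟩, hdL, hb, hf⟩ := der_app_inv d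
      subst hE
      obtain ⟨E₀', ⟨dK'⟩, hK1, hK2⟩ := ih₁ r hr dK
      choose Es' hd h1 h2 using fun p => ih₂ r hr (hdL p).some
      have hEsize : ∀ p, (Es' p).prSize = (Es p).prSize :=
        fun p => prSize_pullback r.1 hr r.2 _ _ (h1 p) (h2 p)
      have hE0size : E₀'.prSize = E₀.prSize :=
        prSize_pullback r.1 hr r.2 _ _ hK1 hK2
      have c1 : ∀ i, Env.appUnion E₀' Es' i = castF (r.2 i) (Env.appUnion E₀ Es (r.1 i)) := by
        intro i
        show E₀' i ∪ Finset.univ.biUnion (fun p => Es' p i)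
          = castF (r.2 i) (E₀ (r.1 i) ∪ Finset.univ.biUnion (fun p => Es p (r.1 i)))
        rw [castF_union, castF_biUnion, hK1 i]
        exact congrArg (fun g => (castF (r.2 i) (E₀ (r.1 i))) ∪ Finset.univ.biUnion g)
          (funext fun p => h1 p i)
      have c2 : ∀ j, (∀ i, r.1 i ≠ j) → Env.appUnion E₀ Es j = ∅ := by
        intro j hj
        show E₀ j ∪ Finset.univ.biUnion (fun p => Es p j) = ∅
        have hall : ∀ p, Es p j = ∅ := fun p => h2 p j hj
        rw [hK2 j hj]
        ext q
        simp [hall]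
      have hUsize : (Env.appUnion E₀' Es').prSize = (Env.appUnion E₀ Es).prSize :=
        prSize_pullback r.1 hr r.2 _ _ c1 c2
      refine ⟨Env.appUnion E₀' Es',
        ⟨Der.app dK' fo Es' (fun p => (hd p).some) ?_ f ?_⟩, c1, c2⟩
      · intro p
        rw [hEsize p]
        exact hb p
      · rw [hUsize, hE0size]
        rw [Finset.sum_congr rfl (fun p _ => hEsize p)]
        exact hf

end RenInv
section GoodSubSec

variable {γ : Ty}

/-- A substitution replacing exactly one variable by (a weakening of) the
closed term `L` and renaming the others injectively. -/
structure GoodSub (L : Tm [] γ) (Γ Δ : List Ty) (s : Sub Γ Δ) where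
  i0 : Fin Γ.length
  h0 : Γ.get i0 = γ
  hsub : s i0 = castTm h0.symm (wk L Δ)
  cinv : Fin Δ.length → Fin Γ.length
  hty : ∀ j, Δ.get j = Γ.get (cinv j)
  hvar : ∀ j, s (cinv j) = castTm (hty j) (Tm.var j)
  hne : ∀ j, cinv j ≠ i0
  hinj : Function.Injective cinv
  hcover : ∀ i, i = i0 ∨ ∃ j, cinv j = i

def GoodSub.lift {L : Tm [] γ} {Γ Δ : List Ty} {s : Sub Γ Δ}
    (G : GoodSub L Γ Δ s) (β : Ty) : GoodSub L (β :: Γ) (β :: Δ) (s.lift β) where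
  i0 := G.i0.succ
  h0 := G.h0
  hsub := by
    have e1 : (s.lift β) G.i0.succ = rename (Ren.shift β) (s G.i0) := rfl
    rw [e1, G.hsub, rename_castTm, rename_wk]
  cinv := fun j =>
    match j with
    | ⟨0, _⟩ => ⟨0, Nat.succ_pos _⟩
    | ⟨k+1, h⟩ => (G.cinv ⟨k, Nat.lt_of_succ_lt_succ h⟩).succ
  hty := by
    intro j
    match j with
    | ⟨0, _⟩ => rfl
    | ⟨k+1, h⟩ => exact G.hty ⟨k, Nat.lt_of_succ_lt_succ h⟩
  hvar := by
    intro j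
    match j with
    | ⟨0, _⟩ => rfl
    | ⟨k+1, h⟩ =>
        have e1 : (s.lift β) (G.cinv ⟨k, Nat.lt_of_succ_lt_succ h⟩).succ
            = rename (Ren.shift β) (s (G.cinv ⟨k, Nat.lt_of_succ_lt_succ h⟩)) := rfl
        show (s.lift β) (G.cinv ⟨k, Nat.lt_of_succ_lt_succ h⟩).succ = _
        rw [e1, G.hvar ⟨k, Nat.lt_of_succ_lt_succ h⟩, rename_castTm]
        rfl
  hne := by
    intro j
    match j with
    | ⟨0, _⟩ =>
        intro he
        have hv : (0 : ℕ) = G.i0.1 + 1 := congrArg Fin.val he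
        exact absurd hv (by omega)
    | ⟨k+1, h⟩ =>
        intro he
        exact G.hne ⟨k, Nat.lt_of_succ_lt_succ h⟩ (Fin.succ_injective _ he)
  hinj := by
    intro j j' he
    match j, j' with
    | ⟨0, h1⟩, ⟨0, h2⟩ => rfl
    | ⟨0, h1⟩, ⟨k+1, h2⟩ =>
        have hv : (0 : ℕ) = (G.cinv ⟨k, Nat.lt_of_succ_lt_succ h2⟩).1 + 1 := congrArg Fin.val he
        exact absurd hv (by omega)
    | ⟨k+1, h1⟩, ⟨0, h2⟩ =>
        have hv : (G.cinv ⟨k, Nat.lt_of_succ_lt_succ h1⟩).1 + 1 = (0 : ℕ) := congrArg Fin.val he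
        exact absurd hv (by omega)
    | ⟨k+1, h1⟩, ⟨k'+1, h2⟩ =>
        have h3 := G.hinj (Fin.succ_injective _ he)
        have h4 : k = k' := congrArg Fin.val h3
        subst h4
        rfl
  hcover := by
    intro i
    match i with
    | ⟨0, h⟩ => exact Or.inr ⟨⟨0, Nat.succ_pos _⟩, rfl⟩
    | ⟨k+1, h⟩ =>
        rcases G.hcover ⟨k, Nat.lt_of_succ_lt_succ h⟩ with he | ⟨j, hj⟩
        · left
          have hv : k = G.i0.1 := congrArg Fin.val he
          exact Fin.ext (show k + 1 = G.i0.1 + 1 by omega)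
        · right
          refine ⟨j.succ, ?_⟩
          show (G.cinv ⟨j.1, _⟩).succ = _
          have : G.cinv ⟨j.1, j.2⟩ = G.cinv j := by congr
          rw [this, hj]
          exact Fin.ext (by simp only [Fin.val_succ])
end GoodSubSec

section FinsetLemmas

lemma card_filter_union_le {γ : Ty} {ι : Type} [Fintype ι] (T₀ : Finset (Bool × ITy γ))
    (Tp : ι → Finset (Bool × ITy γ)) :
    ((T₀ ∪ Finset.univ.biUnion Tp).filter (fun q => q.1 = true)).card
      ≤ (T₀.filter (fun q => q.1 = true)).card
        + ∑ p, ((Tp p).filter (fun q => q.1 = true)).card := by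
  have h1 : ((T₀ ∪ Finset.univ.biUnion Tp).filter (fun q => q.1 = true)).card
      ≤ (T₀.filter (fun q => q.1 = true)).card
        + ((Finset.univ.biUnion Tp).filter (fun q => q.1 = true)).card := by
    rw [Finset.filter_union]
    exact Finset.card_union_le _ _
  have h2 : ((Finset.univ.biUnion Tp).filter (fun q => q.1 = true)).card
      ≤ ∑ p, ((Tp p).filter (fun q => q.1 = true)).card := by
    rw [Finset.filter_biUnion]
    exact Finset.card_biUnion_le
  omega

lemma exists_pr_of_card_lt {γ : Ty} {ι : Type} [Fintype ι] (T₀ : Finset (Bool × ITy γ))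
    (Tp : ι → Finset (Bool × ITy γ))
    (h : ((T₀ ∪ Finset.univ.biUnion Tp).filter (fun q => q.1 = true)).card
      < (T₀.filter (fun q => q.1 = true)).card
        + ∑ p, ((Tp p).filter (fun q => q.1 = true)).card) :
    ∃ q ∈ T₀ ∪ Finset.univ.biUnion Tp, q.1 = true := by
  by_contra hno
  push_neg at hno
  have h0 : T₀.filter (fun q => q.1 = true) = ∅ := by
    apply Finset.filter_eq_empty_iff.mpr
    intro q hq
    simpa using hno q (Finset.mem_union_left _ hq)
  have hp : ∀ p, (Tp p).filter (fun q => q.1 = true) = ∅ := by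
    intro p
    apply Finset.filter_eq_empty_iff.mpr
    intro q hq
    exact fun hh => by
      simpa [hh] using hno q (Finset.mem_union_right _ (Finset.mem_biUnion.mpr ⟨p, Finset.mem_univ _, hq⟩))
  rw [h0] at h
  rw [Finset.sum_congr rfl (fun p _ => by rw [hp p])] at h
  simp at h

lemma exists_pr_iff_card_pos {γ : Ty} (T : Finset (Bool × ITy γ)) :
    (∃ q ∈ T, q.1 = true) ↔ 0 < (T.filter (fun q => q.1 = true)).card := by
  rw [Finset.card_pos, Finset.filter_nonempty_iff]

end FinsetLemmas
section MainLemma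

set_option maxHeartbeats 2000000 in
theorem subst_expansion {γ : Ty} (L : Tm [] γ) :
    ∀ {Γ : List Ty} {δ : Ty} (K : Tm Γ δ) {Δ : List Ty} (s : Sub Γ Δ)
      (G : GoodSub L Γ Δ s) (E : Env Δ) (f : Bool) (τ : ITy δ),
      Der E (substTm s K) f τ →
      ∃ (T : Finset (Bool × ITy γ)) (f' : Bool) (E' : Env Γ),
        Nonempty (Der E' K f' τ)
        ∧ (∀ p ∈ T, Nonempty (Der (Env.empty : Env []) L p.1 p.2))
        ∧ (∀ j, E' (G.cinv j) = castF (G.hty j) (E j))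
        ∧ (E' G.i0 = castF G.h0.symm T)
        ∧ (f = true ↔ (f' = true ∨ ∃ p ∈ T, p.1 = true)) := by
  intro Γ δ K
  induction K with
  | var i =>
      intro Δ s G E f τ d
      have hd : Der E (s i) f τ := d
      rcases G.hcover i with hi0 | ⟨j, hj⟩
      · subst hi0
        rw [G.hsub] at hd
        obtain ⟨τ₀, hτ, ⟨d'⟩⟩ := der_cast_inv _ _ hd
        obtain ⟨E'', ⟨dL⟩, hc1, hc2⟩ :=
          ren_inv L (Ren.emptyR Δ) (fun a => Fin.elim0 a) d'
        have hEempty : ∀ j', E j' = ∅ := fun j' => hc2 j' (fun i' => Fin.elim0 i')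
        have hE'' : E'' = Env.empty := env_nil_eq E''
        refine ⟨{(f, τ₀)}, false, Env.single G.i0 (f, τ), ⟨Der.var G.i0 f τ⟩, ?_, ?_, ?_, ?_⟩
        · intro p hp
          simp only [Finset.mem_singleton] at hp
          subst hp
          exact ⟨hE'' ▸ dL⟩
        · intro j
          rw [single_ne _ _ _ (Ne.symm (G.hne j)), hEempty j, castF_empty]
        · rw [single_self, castF_singleton, hτ]
        · simp
      · subst hj
        rw [G.hvar j] at hd
        obtain ⟨τ₀, hτ, ⟨d'⟩⟩ := der_cast_inv _ _ hd
        obtain ⟨g, hE, hf⟩ := der_var_inv d'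
        subst hE; subst hτ; subst hf
        refine ⟨∅, false, Env.single (G.cinv j) (g, castI (G.hty j) τ₀),
          ⟨Der.var _ g _⟩, ?_, ?_, ?_, ?_⟩
        · intro p hp
          simp at hp
        · intro j'
          by_cases hjj : j = j'
          · subst hjj
            rw [single_self, single_self, castF_singleton]
          · rw [single_ne _ _ _ (fun he => hjj (G.hinj he)),
              single_ne _ _ _ (fun he => hjj he), castF_empty]
        · rw [single_ne _ _ _ (G.hne j), castF_empty]
        · simp
  | ca =>
      intro Δ s G E f τ d
      have hd : Der E (.ca : Tm Δ _) f τ := d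
      obtain ⟨g, hτ, hE, hf⟩ := der_ca_inv hd
      subst hτ; subst hE; subst hf
      refine ⟨∅, true, Env.empty, ⟨Der.ca g⟩, by simp, ?_, ?_, by simp⟩
      · intro j
        show (∅ : Finset _) = castF _ (∅ : Finset _)
        rw [castF_empty]
      · show (∅ : Finset _) = castF _ (∅ : Finset _)
        rw [castF_empty]
  | cb =>
      intro Δ s G E f τ d
      have hd : Der E (.cb : Tm Δ _) f τ := d
      obtain ⟨g₁, g₂, hτ, hE, hf⟩ := der_cb_inv hd
      subst hτ; subst hE; subst hf
      refine ⟨∅, false, Env.empty, ⟨Der.cb g₁ g₂⟩, by simp, ?_, ?_, by simp⟩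
      · intro j
        show (∅ : Finset _) = castF _ (∅ : Finset _)
        rw [castF_empty]
      · show (∅ : Finset _) = castF _ (∅ : Finset _)
        rw [castF_empty]
  | ce =>
      intro Δ s G E f τ d
      have hd : Der E (.ce : Tm Δ _) f τ := d
      obtain ⟨hE, hf⟩ := der_ce_inv hd
      subst hE; subst hf
      have hτ : τ = ITy.base := rfl
      refine ⟨∅, false, Env.empty, ⟨hτ ▸ Der.ce⟩, by simp, ?_, ?_, by simp⟩
      · intro j
        show (∅ : Finset _) = castF _ (∅ : Finset _)
        rw [castF_empty]
      · show (∅ : Finset _) = castF _ (∅ : Finset _)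
        rw [castF_empty]
  | lam K₁ ih =>
      intro Δ s G E f τ d
      have hd : Der E (.lam (substTm (s.lift _) K₁)) f τ := d
      obtain ⟨T₁, τ₁, hτ, ⟨d₁⟩⟩ := der_lam_inv hd
      subst hτ
      obtain ⟨T, f', E'', ⟨dK⟩, hL, hc1, hc0, hflag⟩ :=
        ih (s.lift _) (G.lift _) (Env.cons T₁ E) f τ₁ d₁
      have hE0 : E'' ⟨0, Nat.succ_pos _⟩ = T₁ := hc1 ⟨0, Nat.succ_pos _⟩
      have hEE : Env.cons T₁ (fun i => E'' i.succ) = E'' := by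
        funext i
        match i with
        | ⟨0, h⟩ => exact hE0.symm
        | ⟨k+1, h⟩ => rfl
      rw [← hEE] at dK
      refine ⟨T, f', (fun i => E'' i.succ), ⟨Der.lam dK⟩, hL, ?_, ?_, hflag⟩
      · intro j
        exact hc1 j.succ
      · exact hc0
  | app K₁ K₂ ih₁ ih₂ =>
      intro Δ s G E f τ d
      have hd : Der E (.app (substTm s K₁) (substTm s K₂)) f τ := d
      obtain ⟨S, fK, E₀, fo, Es, hE, ⟨dK⟩, hdL, hb, hf⟩ := der_app_inv hd
      subst hE
      obtain ⟨T₀, fK', E₀', ⟨dK'⟩, hL₀, hcK1, hcK0, hflagK⟩ := ih₁ s G E₀ fK _ dK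
      choose Tp fp Ep hdp hLp hc1p hc0p hflagp using
        fun p => ih₂ s G (Es p) (fo p) p.1.2 (hdL p).some
      have hEsize : ∀ p, (Ep p).prSize
          = (Es p).prSize + ((Tp p).filter (fun q => q.1 = true)).card :=
        fun p => prSize_ext G.i0 G.cinv G.hne G.hinj G.hcover G.hty G.h0 _ _ _
          (hc1p p) (hc0p p)
      have hE0size : E₀'.prSize = E₀.prSize + (T₀.filter (fun q => q.1 = true)).card :=
        prSize_ext G.i0 G.cinv G.hne G.hinj G.hcover G.hty G.h0 _ _ _ hcK1 hcK0
      have c1 : ∀ j, Env.appUnion E₀' Ep (G.cinv j) = castF (G.hty j) (Env.appUnion E₀ Es j) := by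
        intro j
        show E₀' (G.cinv j) ∪ Finset.univ.biUnion (fun p => Ep p (G.cinv j))
          = castF (G.hty j) (E₀ j ∪ Finset.univ.biUnion (fun p => Es p j))
        rw [castF_union, castF_biUnion, hcK1 j]
        exact congrArg (fun g => (castF (G.hty j) (E₀ j)) ∪ Finset.univ.biUnion g)
          (funext fun p => hc1p p j)
      have c0 : Env.appUnion E₀' Ep G.i0
          = castF G.h0.symm (T₀ ∪ Finset.univ.biUnion Tp) := by
        show E₀' G.i0 ∪ Finset.univ.biUnion (fun p => Ep p G.i0)
          = castF G.h0.symm (T₀ ∪ Finset.univ.biUnion Tp)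
        rw [castF_union, castF_biUnion, hcK0]
        exact congrArg (fun g => (castF G.h0.symm T₀) ∪ Finset.univ.biUnion g)
          (funext fun p => hc0p p)
      have hUsize : (Env.appUnion E₀' Ep).prSize
          = (Env.appUnion E₀ Es).prSize
            + ((T₀ ∪ Finset.univ.biUnion Tp).filter (fun q => q.1 = true)).card :=
        prSize_ext G.i0 G.cinv G.hne G.hinj G.hcover G.hty G.h0 _ _ _ c1 c0
      classical
      set C : Prop := (fK' = true ∨ (∃ p, fp p = true) ∨
          Env.prSize (Env.appUnion E₀' Ep) < E₀'.prSize
            + ∑ p : {p // p ∈ S}, (Ep p).prSize) with hCdef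
      refine ⟨T₀ ∪ Finset.univ.biUnion Tp, if C then true else false, Env.appUnion E₀' Ep,
        ⟨Der.app dK' fp Ep (fun p => (hdp p).some) ?_ (if C then true else false) ?_⟩,
        ?_, c1, c0, ?_⟩
      · -- hb for the new application node
        intro p
        have old := hb p
        have hfo := hflagp p
        have harith : (0 < (Ep p).prSize)
            ↔ (0 < (Es p).prSize ∨ ∃ q ∈ Tp p, q.1 = true) := by
          rw [hEsize p, exists_pr_iff_card_pos]
          omega
        apply Bool.eq_iff_iff.mpr
        rw [old]
        simp only [Bool.or_eq_true, decide_eq_true_eq]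
        constructor
        · rintro (hfo1 | hpos)
          · rcases hfo.mp hfo1 with h | h
            · exact Or.inl h
            · exact Or.inr (harith.mpr (Or.inr h))
          · exact Or.inr (harith.mpr (Or.inl hpos))
        · rintro (h | hpos)
          · exact Or.inl (hfo.mpr (Or.inl h))
          · rcases harith.mp hpos with h | h
            · exact Or.inr h
            · exact Or.inl (hfo.mpr (Or.inr h))
      · -- hf for the new application node
        by_cases hC : C
        · rw [if_pos hC]
          exact iff_of_true rfl (hCdef ▸ hC)
        · rw [if_neg hC]
          exact iff_of_false Bool.false_ne_true (hCdef ▸ hC)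
      · -- derivations of L
        intro p hp
        rcases Finset.mem_union.mp hp with h1 | h2
        · exact hL₀ p h1
        · obtain ⟨q, -, hq⟩ := Finset.mem_biUnion.mp h2
          exact hLp q p hq
      · -- the flag equivalence
        have hAB : (Env.appUnion E₀ Es).prSize ≤ E₀.prSize + ∑ p, (Es p).prSize :=
          prSize_appUnion_le _ _
        have hus := card_filter_union_le T₀ Tp
        have hCif : (if C then true else false) = true ↔ C := by
          by_cases hC : C <;> simp [hC]
        have hsum : ∑ p : {p // p ∈ S}, (Ep p).prSize
            = (∑ p : {p // p ∈ S}, (Es p).prSize)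
              + ∑ p : {p // p ∈ S}, ((Tp p).filter (fun q => q.1 = true)).card := by
          rw [← Finset.sum_add_distrib]
          exact Finset.sum_congr rfl (fun p _ => hEsize p)
        have hexU : (∃ q ∈ T₀ ∪ Finset.univ.biUnion Tp, q.1 = true)
            ↔ ((∃ q ∈ T₀, q.1 = true) ∨ ∃ p, ∃ q ∈ Tp p, q.1 = true) := by
          constructor
          · rintro ⟨q, hq, hq1⟩
            rcases Finset.mem_union.mp hq with h1 | h2
            · exact Or.inl ⟨q, h1, hq1⟩
            · obtain ⟨p, -, hp⟩ := Finset.mem_biUnion.mp h2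
              exact Or.inr ⟨p, q, hp, hq1⟩
          · rintro (⟨q, hq, hq1⟩ | ⟨p, q, hq, hq1⟩)
            · exact ⟨q, Finset.mem_union_left _ hq, hq1⟩
            · exact ⟨q, Finset.mem_union_right _ (Finset.mem_biUnion.mpr ⟨p, Finset.mem_univ _, hq⟩), hq1⟩
        have hlt_iff : ((Env.appUnion E₀' Ep).prSize
              < E₀'.prSize + ∑ p : {p // p ∈ S}, (Ep p).prSize)
            ↔ ((Env.appUnion E₀ Es).prSize < E₀.prSize + ∑ p : {p // p ∈ S}, (Es p).prSize
              ∨ ((T₀ ∪ Finset.univ.biUnion Tp).filter (fun q => q.1 = true)).card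
                  < (T₀.filter (fun q => q.1 = true)).card
                    + ∑ p : {p // p ∈ S}, ((Tp p).filter (fun q => q.1 = true)).card) := by
          omega
        rw [hf, hCif, hCdef, hflagK, hexU]
        simp only [hflagp]
        constructor
        · rintro ((hK' | hT0) | ⟨p, (hp | hTp)⟩ | hlt)
          · exact Or.inl (Or.inl hK')
          · exact Or.inr (Or.inl hT0)
          · exact Or.inl (Or.inr (Or.inl ⟨p, hp⟩))
          · exact Or.inr (Or.inr ⟨p, hTp⟩)
          · exact Or.inl (Or.inr (Or.inr (hlt_iff.mpr (Or.inl hlt))))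
        · rintro ((hK' | ⟨p, hp⟩ | hlt) | hT0 | ⟨p, hTp⟩)
          · exact Or.inl (Or.inl hK')
          · exact Or.inr (Or.inl ⟨p, Or.inl hp⟩)
          · rcases hlt_iff.mp hlt with holt | hu
            · exact Or.inr (Or.inr holt)
            · obtain ⟨q, hq, hq1⟩ := exists_pr_of_card_lt T₀ Tp hu
              rcases Finset.mem_union.mp hq with h1 | h2
              · exact Or.inl (Or.inr ⟨q, h1, hq1⟩)
              · obtain ⟨p, -, hp⟩ := Finset.mem_biUnion.mp h2
                exact Or.inr (Or.inl ⟨p, Or.inr ⟨q, hp, hq1⟩⟩)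
          · exact Or.inl (Or.inr hT0)
          · exact Or.inr (Or.inl ⟨p, Or.inr hTp⟩)

end MainLemma

noncomputable def G0 {γ : Ty} (L : Tm [] γ) : GoodSub L [γ] []
    (fun i => match i with
      | ⟨0, _⟩ => L
      | ⟨j+1, h⟩ => Tm.var ⟨j, Nat.lt_of_succ_lt_succ h⟩) where
  i0 := ⟨0, Nat.succ_pos _⟩
  h0 := rfl
  hsub := by
    show L = castTm _ (wk L [])
    rw [wk_nil]
    rfl
  cinv := fun j => Fin.elim0 j
  hty := fun j => Fin.elim0 j
  hvar := fun j => Fin.elim0 j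
  hne := fun j => Fin.elim0 j
  hinj := by intro a; exact Fin.elim0 a
  hcover := by
    intro i
    match i with
    | ⟨0, h⟩ => exact Or.inl rfl
    | ⟨k+1, h⟩ => exact absurd (Nat.lt_of_succ_lt_succ h) (Nat.not_lt_zero k)

/-- Subject expansion for closed redexes: if `⊢ K[L/x] : (g, τ)` is derivable
(with empty type environment), then so is `⊢ (λx.K) L : (g, τ)`. -/
theorem subject_expansion_closed {γ δ : Ty} (K : Tm [γ] δ) (L : Tm [] γ)
    (g : Bool) (τ : ITy δ)
    (h : Nonempty (Der Env.empty (subst0 K L) g τ)) :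
    Nonempty (Der Env.empty (.app (.lam K) L) g τ) := by
  obtain ⟨d⟩ := h
  obtain ⟨T, f', E', ⟨dK⟩, hLt, hc1, hc0, hflag⟩ :=
    subst_expansion L K _ (G0 L) Env.empty g τ (by
      have e : subst0 K L = substTm (fun i => match i with
        | ⟨0, _⟩ => L
        | ⟨j+1, h⟩ => Tm.var ⟨j, Nat.lt_of_succ_lt_succ h⟩) K := by
        show substTm _ K = substTm _ K
        congr 1
        funext i
        match i with
        | ⟨0, h⟩ => rfl
        | ⟨j+1, h⟩ => rfl
      rw [e] at d
      exact d)
  have hcons : Env.cons T (Env.empty : Env []) = E' := by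
    funext i
    match i with
    | ⟨0, h⟩ => exact hc0.symm
    | ⟨k+1, h⟩ => exact absurd (Nat.lt_of_succ_lt_succ h) (Nat.not_lt_zero k)
  have dK' : Der (Env.cons T Env.empty) K f' τ := by rw [hcons]; exact dK
  have dlam : Der (Env.empty : Env []) (.lam K) f' (ITy.arr T τ) := Der.lam dK'
  have hbv : ∀ p : {p // p ∈ T},
      p.1.1 = (p.1.1 || decide (0 < Env.prSize (Env.empty : Env []))) := by
    intro p
    rw [prSize_nil]
    simp
  have hfv : g = true ↔ (f' = true ∨ (∃ p : {p // p ∈ T}, p.1.1 = true) ∨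
      Env.prSize (Env.appUnion (Env.empty : Env []) (fun _ : {p // p ∈ T} => (Env.empty : Env [])))
        < Env.prSize (Env.empty : Env [])
          + ∑ _p : {p // p ∈ T}, Env.prSize (Env.empty : Env [])) := by
    rw [hflag]
    constructor
    · rintro (h1 | ⟨p, hp, h1⟩)
      · exact Or.inl h1
      · exact Or.inr (Or.inl ⟨⟨p, hp⟩, h1⟩)
    · rintro (h1 | ⟨p, h1⟩ | hlt)
      · exact Or.inl h1
      · exact Or.inr ⟨p.1, p.2, h1⟩
      · exfalso
        rw [prSize_nil, prSize_nil] at hlt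
        simp at hlt
  have happ := Der.app dlam (fun p => p.1.1) (fun _ => (Env.empty : Env []))
      (fun p => (hLt p.1 p.2).some) hbv g hfv
  have henv : Env.appUnion (Env.empty : Env [])
      (fun _ : {p // p ∈ T} => (Env.empty : Env [])) = (Env.empty : Env []) :=
    env_nil_eq _
  rw [henv] at happ
  exact ⟨happ⟩

end STLC
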